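/- arXiv:2205.14067 — 3 statements merged into one kernel-verified Lean document; each statement's English description precedes it below -/
import Mathlib

section
/- If Z ~ N(0,1) and we define W with density f_W(w) = α w^{α-1} exp(-w^α) for w > 0 (Weibull with shape α ∈ (0,2]), and E is exponential with mean 1 independent of a positive stable random variable P with index α/2, then P/E has the same distribution as 1/W². Equivalently, the random variable 1/W² where W is Weibull(α) has the same law as the ratio of a positive α/2-stable variable to an independent standard exponential. -/
/-!
For `t > 0`, conditioning on `P` and using the exponential tail `P(E ≥ x) = e^{-x}` gives
`P(P/E ≤ t) = P(E ≥ P/t) = E[e^{-P/t}] = exp(-t^{-α/2})`, while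
`P(1/W² ≤ t) = P(W ≥ t^{-1/2}) = exp(-t^{-α/2})` by the Weibull tail. Both variables are
a.s. positive (for `P`, Markov's inequality `P(P ≤ 0) ≤ E[e^{-sP}] = e^{-s^{α/2}} → 0`), so the
two distribution functions also agree, with value `0`, for `t ≤ 0`.
-/

open MeasureTheory ProbabilityTheory Real Set Filter Topology

lemma tendsto_exp_neg_rpow_atTop {β : ℝ} (hβ : 0 < β) :
    Tendsto (fun s : ℝ => exp (-(s ^ β))) atTop (𝓝 0) :=
  tendsto_exp_atBot.comp (tendsto_neg_atTop_atBot.comp (tendsto_rpow_atTop hβ))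

lemma setLIntegral_Ici_weibull {α a : ℝ} (hα : 0 < α) (ha : 0 < a) :
    ∫⁻ w in Ici a, ENNReal.ofReal (if 0 < w then α * w ^ (α - 1) * exp (-(w ^ α)) else 0)
      = ENNReal.ofReal (exp (-(a ^ α))) := by
  have hderiv : ∀ w ∈ Ici a,
      HasDerivAt (fun w => -exp (-(w ^ α))) (α * w ^ (α - 1) * exp (-(w ^ α))) w := by
    intro w hw
    have hpow : HasDerivAt (fun w : ℝ => w ^ α) (α * w ^ (α - 1)) w :=
      hasDerivAt_rpow_const (Or.inl (ha.trans_le hw).ne')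
    exact hpow.fun_neg.exp.fun_neg.congr_deriv (by ring)
  have hnonneg : ∀ w ∈ Ioi a, 0 ≤ α * w ^ (α - 1) * exp (-(w ^ α)) := fun w hw => by
    have := rpow_nonneg (ha.trans hw).le (α - 1)
    positivity
  have htop : Tendsto (fun w : ℝ => -exp (-(w ^ α))) atTop (𝓝 0) := by
    simpa using (tendsto_exp_neg_rpow_atTop hα).neg
  rw [← setLIntegral_congr Ioi_ae_eq_Ici,
    setLIntegral_congr_fun measurableSet_Ioi fun w (hw : a < w) => by rw [if_pos (ha.trans hw)],
    ← ofReal_integral_eq_lintegral_ofReal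
      (integrableOn_Ioi_deriv_of_nonneg' hderiv hnonneg htop)
      ((ae_restrict_iff' measurableSet_Ioi).mpr (ae_of_all _ hnonneg)),
    integral_Ioi_of_hasDerivAt_of_nonneg' hderiv hnonneg htop, zero_sub, neg_neg]

lemma setLIntegral_Ici_exponential {b : ℝ} (hb : 0 < b) :
    ∫⁻ x in Ici b, ENNReal.ofReal (if 0 < x then exp (-x) else 0) = ENNReal.ofReal (exp (-b)) := by
  simpa using setLIntegral_Ici_weibull one_pos hb

section RandomVariables

variable {Ω : Type*} [MeasurableSpace Ω] {μ : Measure Ω}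

lemma ae_pos_of_map_eq_withDensity {X : Ω → ℝ} (hXm : Measurable X) {g : ℝ → ENNReal}
    (hX : μ.map X = volume.withDensity g) (hg : ∀ x ≤ 0, g x = 0) : ∀ᵐ ω ∂μ, 0 < X ω := by
  have hnull : μ (X ⁻¹' Iic 0) = 0 := by
    rw [← Measure.map_apply hXm measurableSet_Iic, hX, withDensity_apply _ measurableSet_Iic]
    exact setLIntegral_eq_zero measurableSet_Iic hg
  filter_upwards [measure_eq_zero_iff_ae_notMem.mp hnull] with ω hω
  simpa using hω

lemma measure_preimage_Iic_eq_zero_of_nonpos {X : Ω → ℝ} (hX : ∀ᵐ ω ∂μ, 0 < X ω) {t : ℝ}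
    (ht : t ≤ 0) : μ (X ⁻¹' Iic t) = 0 := by
  rw [measure_eq_zero_iff_ae_notMem]
  filter_upwards [hX] with ω hω
  simpa using ht.trans_lt hω

lemma ae_pos_of_integral_exp_neg_mul [IsFiniteMeasure μ] {P : Ω → ℝ} {β : ℝ} (hβ : 0 < β)
    (hP : ∀ s : ℝ, 0 ≤ s → ∫ ω, exp (-(s * P ω)) ∂μ = exp (-(s ^ β))) :
    ∀ᵐ ω ∂μ, 0 < P ω := by
  have hbound : ∀ s : ℝ, 0 ≤ s → μ.real {ω | P ω ≤ 0} ≤ exp (-(s ^ β)) := by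
    intro s hs
    have hint : Integrable (fun ω => exp (-(s * P ω))) μ :=
      Integrable.of_integral_ne_zero (by rw [hP s hs]; exact (exp_pos _).ne')
    calc μ.real {ω | P ω ≤ 0} ≤ μ.real {ω | 1 ≤ exp (-(s * P ω))} :=
          measureReal_mono fun ω (hω : P ω ≤ 0) => one_le_exp (by nlinarith)
      _ ≤ ∫ ω, exp (-(s * P ω)) ∂μ := by
          simpa using mul_meas_ge_le_integral_of_nonneg
            (ae_of_all _ fun ω => (exp_pos (-(s * P ω))).le) hint 1
      _ = exp (-(s ^ β)) := hP s hs
  have hzero : μ.real {ω | P ω ≤ 0} = 0 :=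
    le_antisymm
      (ge_of_tendsto (tendsto_exp_neg_rpow_atTop hβ) ((eventually_ge_atTop 0).mono hbound))
      measureReal_nonneg
  rw [measureReal_eq_zero_iff] at hzero
  simpa [ae_iff] using hzero

lemma measure_div_le_of_indepFun_exponential [IsFiniteMeasure μ] {P E : Ω → ℝ}
    (hPm : Measurable P) (hEm : Measurable E) (hPE : IndepFun P E μ)
    (hE : μ.map E = volume.withDensity fun x => ENNReal.ofReal (if 0 < x then exp (-x) else 0))
    (hP : ∀ᵐ ω ∂μ, 0 < P ω) {t : ℝ} (ht : 0 < t) :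
    μ ((fun ω => P ω / E ω) ⁻¹' Iic t) = ∫⁻ ω, ENNReal.ofReal (exp (-(t⁻¹ * P ω))) ∂μ := by
  have hEpos := ae_pos_of_map_eq_withDensity hEm hE fun x hx => by simp [hx.not_gt]
  have hS : MeasurableSet {q : ℝ × ℝ | q.1 ≤ t * q.2} :=
    measurableSet_le measurable_fst (measurable_snd.const_mul t)
  have hsection : ∀ p : ℝ, 0 < p →
      μ.map E (Prod.mk p ⁻¹' {q : ℝ × ℝ | q.1 ≤ t * q.2}) = ENNReal.ofReal (exp (-(t⁻¹ * p))) := by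
    intro p hp
    have hIci : Prod.mk p ⁻¹' {q : ℝ × ℝ | q.1 ≤ t * q.2} = Ici (t⁻¹ * p) := by
      ext e
      simp [inv_mul_le_iff₀ ht]
    rw [hIci, hE, withDensity_apply _ measurableSet_Ici,
      setLIntegral_Ici_exponential (by positivity)]
  calc μ ((fun ω => P ω / E ω) ⁻¹' Iic t) = μ {ω | P ω ≤ t * E ω} := by
        apply measure_congr
        filter_upwards [hEpos] with ω hω
        simp only [eq_iff_iff]
        change P ω / E ω ≤ t ↔ P ω ≤ t * E ω
        rw [div_le_iff₀ hω, mul_comm]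
    _ = (μ.map P).prod (μ.map E) {q : ℝ × ℝ | q.1 ≤ t * q.2} := by
        rw [← (indepFun_iff_map_prod_eq_prod_map_map hPm.aemeasurable hEm.aemeasurable).mp hPE,
          Measure.map_apply (hPm.prodMk hEm) hS]
        rfl
    _ = ∫⁻ p, ENNReal.ofReal (exp (-(t⁻¹ * p))) ∂μ.map P := by
        rw [Measure.prod_apply hS]
        apply lintegral_congr_ae
        filter_upwards [(ae_map_iff hPm.aemeasurable measurableSet_Ioi).mpr hP] with p hp
        exact hsection p hp
    _ = ∫⁻ ω, ENNReal.ofReal (exp (-(t⁻¹ * P ω))) ∂μ := lintegral_map (by fun_prop) hPm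

lemma measure_one_div_sq_le_of_weibull {W : Ω → ℝ} (hWm : Measurable W) {α : ℝ} (hα : 0 < α)
    (hW : μ.map W = volume.withDensity fun w =>
      ENNReal.ofReal (if 0 < w then α * w ^ (α - 1) * exp (-(w ^ α)) else 0))
    {t : ℝ} (ht : 0 < t) :
    μ ((fun ω => 1 / W ω ^ 2) ⁻¹' Iic t) = ENNReal.ofReal (exp (-(t⁻¹ ^ (α / 2)))) := by
  have hWpos := ae_pos_of_map_eq_withDensity hWm hW fun x hx => by simp [hx.not_gt]
  have hroot : 0 < √t⁻¹ := by positivity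
  calc μ ((fun ω => 1 / W ω ^ 2) ⁻¹' Iic t) = μ (W ⁻¹' Ici √t⁻¹) := by
        apply measure_congr
        filter_upwards [hWpos] with ω hω
        simp only [eq_iff_iff]
        change 1 / W ω ^ 2 ≤ t ↔ √t⁻¹ ≤ W ω
        rw [one_div_le (by positivity) ht, sqrt_le_iff, one_div]
        exact ⟨fun h => ⟨hω.le, h⟩, And.right⟩
    _ = ENNReal.ofReal (exp (-(√t⁻¹ ^ α))) := by
        rw [← Measure.map_apply hWm measurableSet_Ici, hW, withDensity_apply _ measurableSet_Ici,
          setLIntegral_Ici_weibull hα hroot]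
    _ = ENNReal.ofReal (exp (-(t⁻¹ ^ (α / 2)))) := by
        rw [sqrt_eq_rpow, ← rpow_mul (by positivity), one_div_mul_eq_div]

end RandomVariables

theorem stmt0_general {Ω : Type*} [MeasurableSpace Ω] (μ : Measure Ω) [IsProbabilityMeasure μ]
    (α : ℝ) (hα : 0 < α)
    (P E W : Ω → ℝ) (hPm : Measurable P) (hEm : Measurable E) (hWm : Measurable W)
    (hPE : IndepFun P E μ)
    (hE : Measure.map E μ = volume.withDensity fun x =>
      ENNReal.ofReal (if 0 < x then Real.exp (-x) else 0))
    (hW : Measure.map W μ = volume.withDensity fun w =>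
      ENNReal.ofReal (if 0 < w then α * w ^ (α - 1) * Real.exp (-(w ^ α)) else 0))
    (hP : ∀ s : ℝ, 0 ≤ s → ∫ ω, Real.exp (-(s * P ω)) ∂μ = Real.exp (-(s ^ (α / 2)))) :
    Measure.map (fun ω => P ω / E ω) μ = Measure.map (fun ω => 1 / (W ω) ^ 2) μ := by
  have hPpos := ae_pos_of_integral_exp_neg_mul (half_pos hα) hP
  have hEpos := ae_pos_of_map_eq_withDensity hEm hE fun x hx => by simp [hx.not_gt]
  have hWpos := ae_pos_of_map_eq_withDensity hWm hW fun x hx => by simp [hx.not_gt]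
  have hQm : Measurable fun ω => P ω / E ω := hPm.div hEm
  have hRm : Measurable fun ω => 1 / W ω ^ 2 := by fun_prop
  refine Measure.ext_of_Iic _ _ fun t => ?_
  rw [Measure.map_apply hQm measurableSet_Iic, Measure.map_apply hRm measurableSet_Iic]
  rcases le_or_gt t 0 with ht | ht
  · have hQpos : ∀ᵐ ω ∂μ, 0 < P ω / E ω := (hPpos.and hEpos).mono fun ω h => div_pos h.1 h.2
    have hRpos : ∀ᵐ ω ∂μ, 0 < 1 / W ω ^ 2 := hWpos.mono fun ω h => by positivity
    rw [measure_preimage_Iic_eq_zero_of_nonpos hQpos ht,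
      measure_preimage_Iic_eq_zero_of_nonpos hRpos ht]
  · have hint : Integrable (fun ω => exp (-(t⁻¹ * P ω))) μ :=
      Integrable.of_integral_ne_zero (by rw [hP _ (by positivity)]; exact (exp_pos _).ne')
    rw [measure_div_le_of_indepFun_exponential hPm hEm hPE hE hPpos ht,
      ← ofReal_integral_eq_lintegral_ofReal hint (ae_of_all _ fun ω => (exp_pos _).le),
      hP _ (by positivity), measure_one_div_sq_le_of_weibull hWm hα hW ht]

/-- If `E` is standard exponential, `W` is Weibull with shape `α`, and the positive
stable variable `P` (index `α/2`, characterized by its Laplace transform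
`E[e^{-sP}] = exp(-s^{α/2})`) is independent of `E`, then `P/E` has the same
distribution as `1/W²`. -/
theorem stmt0 {Ω : Type*} [MeasurableSpace Ω] (μ : Measure Ω) [IsProbabilityMeasure μ]
    (α : ℝ) (hα : 0 < α) (hα2 : α ≤ 2)
    (P E W : Ω → ℝ) (hPm : Measurable P) (hEm : Measurable E) (hWm : Measurable W)
    (hPE : IndepFun P E μ)
    (hE : Measure.map E μ = volume.withDensity fun x =>
      ENNReal.ofReal (if 0 < x then Real.exp (-x) else 0))
    (hW : Measure.map W μ = volume.withDensity fun w =>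
      ENNReal.ofReal (if 0 < w then α * w ^ (α - 1) * Real.exp (-(w ^ α)) else 0))
    (hP : ∀ s : ℝ, 0 ≤ s → ∫ ω, Real.exp (-(s * P ω)) ∂μ = Real.exp (-(s ^ (α / 2)))) :
    Measure.map (fun ω => P ω / E ω) μ = Measure.map (fun ω => 1 / (W ω) ^ 2) μ :=
  stmt0_general μ α hα P E W hPm hEm hWm hPE hE hW hP
end

section
/- Let Y = μ + √P(λ|Z₀| + Σ^{1/2}Z₁) as above, and let E be an exponential random variable with mean 1 independent of (P, Z₀, Z₁). Suppose 1/W =ᵈ √(P/E) where W is Weibull with shape α. Then V := (Y − μ)/√E has the hierarchical representation: V | T=t, W=w ~ N_d(λt, w^{−2}Σ), T | W=w ~ HN(0, w^{−2}), W ~ Weibull(α). -/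
open MeasureTheory ProbabilityTheory Matrix

/-!
Since `V = √(P/E) · G` with `G = |Z₀|λ + Σ^{1/2}Z₁`, and both `√(P/E)` and `1/W` are independent
of `G` and have the same law, the pairs `(√(P/E), G)` and `(1/W, G)` have the same joint law,
hence so do the products `√(P/E) · G` and `(1/W) · G`. If `G` is not a.e. measurable, neither
product is (both scalars are a.e. measurable and nonvanishing), so both laws are `0`.
-/

noncomputable def weibullPDF (α w : ℝ) : ℝ :=
  if 0 < w then α * w ^ (α - 1) * Real.exp (-(w ^ α)) else 0

lemma weibullPDF_pos {α w : ℝ} (hα : 0 < α) (hw : 0 < w) : 0 < weibullPDF α w := by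
  rw [weibullPDF, if_pos hw]
  exact mul_pos (mul_pos hα (Real.rpow_pos_of_pos hw _)) (Real.exp_pos _)

lemma measurable_weibullPDF (α : ℝ) : Measurable (weibullPDF α) :=
  Measurable.ite measurableSet_Ioi (by fun_prop) measurable_const

lemma withDensity_weibullPDF_ne_zero {α : ℝ} (hα : 0 < α) :
    volume.withDensity (fun w => ENNReal.ofReal (weibullPDF α w)) ≠ 0 := by
  intro h
  have hnull := (withDensity_eq_zero_iff
    (measurable_weibullPDF α).ennreal_ofReal.aemeasurable).1 h
  have hsub : Set.Ioi (0 : ℝ) ⊆ {w | ENNReal.ofReal (weibullPDF α w) ≠ 0} :=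
    fun w hw => (ENNReal.ofReal_pos.2 (weibullPDF_pos hα hw)).ne'
  simpa using measure_mono_null hsub hnull

lemma AEMeasurable.of_smul_of_ne_zero {Ω 𝕜 E : Type*} [MeasurableSpace Ω] {μ : Measure Ω}
    [GroupWithZero 𝕜] [MeasurableSpace 𝕜] [MeasurableInv 𝕜] [MulAction 𝕜 E]
    [MeasurableSpace E] [MeasurableSMul₂ 𝕜 E] {c : Ω → 𝕜} {G : Ω → E}
    (hc : AEMeasurable c μ) (hc0 : ∀ ω, c ω ≠ 0) (hcG : AEMeasurable (fun ω => c ω • G ω) μ) :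
    AEMeasurable G μ :=
  (hc.inv.smul hcG).congr (.of_forall fun ω => inv_smul_smul₀ (hc0 ω) (G ω))

lemma map_smul_eq_of_identDistrib {Ω 𝕜 E : Type*} [MeasurableSpace Ω] {μ : Measure Ω}
    [IsFiniteMeasure μ] [GroupWithZero 𝕜] [MeasurableSpace 𝕜] [MeasurableInv 𝕜]
    [MulAction 𝕜 E] [MeasurableSpace E] [MeasurableSMul₂ 𝕜 E] {X X' : Ω → 𝕜} {G : Ω → E}
    (hXX' : IdentDistrib X X' μ μ) (hX0 : ∀ ω, X ω ≠ 0) (hX'0 : ∀ ω, X' ω ≠ 0)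
    (hXG : IndepFun X G μ) (hX'G : IndepFun X' G μ) :
    μ.map (fun ω => X ω • G ω) = μ.map (fun ω => X' ω • G ω) := by
  by_cases hG : AEMeasurable G μ
  · exact ((hXX'.prodMk (IdentDistrib.refl hG) hXG hX'G).comp measurable_smul).map_eq
  · rw [Measure.map_of_not_aemeasurable
        (fun h => hG (hXX'.aemeasurable_fst.of_smul_of_ne_zero hX0 h)),
      Measure.map_of_not_aemeasurable
        (fun h => hG (hXX'.aemeasurable_snd.of_smul_of_ne_zero hX'0 h))]

theorem stmt6_general {Ω : Type*} [MeasurableSpace Ω] (μ : Measure Ω) [IsProbabilityMeasure μ]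
    (d : ℕ) (μv lam : Fin d → ℝ) (Shalf : Matrix (Fin d) (Fin d) ℝ)
    (α : ℝ) (hα : 0 < α)
    (P E W : Ω → ℝ) (Z0 : Ω → ℝ) (Z1 : Ω → Fin d → ℝ)
    (hPpos : ∀ ω, 0 < P ω) (hEpos : ∀ ω, 0 < E ω) (hWpos : ∀ ω, 0 < W ω)
    (hW : Measure.map W μ = volume.withDensity fun w =>
      ENNReal.ofReal (if 0 < w then α * w ^ (α - 1) * Real.exp (-(w ^ α)) else 0))
    (hratio : Measure.map (fun ω => Real.sqrt (P ω / E ω)) μ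
      = Measure.map (fun ω => 1 / W ω) μ)
    (hindep1 : IndepFun (fun ω => P ω / E ω) (fun ω => (Z0 ω, Z1 ω)) μ)
    (hindep2 : IndepFun W (fun ω => (Z0 ω, Z1 ω)) μ)
    (Y : Ω → Fin d → ℝ)
    (hY : ∀ ω, Y ω = μv + Real.sqrt (P ω) • (|Z0 ω| • lam + Shalf.mulVec (Z1 ω))) :
    Measure.map (fun ω => (1 / Real.sqrt (E ω)) • (Y ω - μv)) μ
      = Measure.map (fun ω => (1 / W ω) • (|Z0 ω| • lam + Shalf.mulVec (Z1 ω))) μ := by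
  have hV : ∀ ω, (1 / Real.sqrt (E ω)) • (Y ω - μv)
      = Real.sqrt (P ω / E ω) • (|Z0 ω| • lam + Shalf.mulVec (Z1 ω)) := fun ω => by
    rw [hY ω, add_sub_cancel_left, smul_smul, Real.sqrt_div (hPpos ω).le, one_div_mul_eq_div]
  simp only [hV]
  have hWm : AEMeasurable W μ :=
    AEMeasurable.of_map_ne_zero (by rw [hW]; exact withDensity_weibullPDF_ne_zero hα)
  have hinvW : AEMeasurable (fun ω => 1 / W ω) μ := hWm.const_div 1
  have hsqrt : AEMeasurable (fun ω => Real.sqrt (P ω / E ω)) μ :=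
    AEMeasurable.of_map_ne_zero
      (by rw [hratio]; exact (Measure.isProbabilityMeasure_map hinvW).ne_zero)
  have hGmap : Measurable fun z : ℝ × (Fin d → ℝ) => |z.1| • lam + Shalf.mulVec z.2 :=
    (((continuous_abs.comp continuous_fst).smul continuous_const).add
      (Shalf.mulVecLin.continuous_of_finiteDimensional.comp continuous_snd)).measurable
  exact map_smul_eq_of_identDistrib ⟨hsqrt, hinvW, hratio⟩
    (fun ω => (Real.sqrt_pos.2 (div_pos (hPpos ω) (hEpos ω))).ne')
    (fun ω => one_div_ne_zero (hWpos ω).ne')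
    (hindep1.comp Real.continuous_sqrt.measurable hGmap)
    (hindep2.comp (measurable_const.div measurable_id) hGmap)

/-- Theorem 2 of the paper: if `Y = μ + √P(|Z₀|·λ + Σ^{1/2}Z₁)`, `E` is standard
exponential with `√(P/E) =ᵈ 1/W` for `W` Weibull with shape `α`, then
`V = (Y − μ)/√E` has the same law as `(1/W)(|Z₀|·λ + Σ^{1/2}Z₁)`, i.e. it admits
the hierarchy `V | T,W ~ N_d(λT, W⁻²Σ)`, `T | W ~ HN(0, W⁻²)`, `W ~ Weibull(α)`. -/
theorem stmt6 {Ω : Type*} [MeasurableSpace Ω] (μ : Measure Ω) [IsProbabilityMeasure μ]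
    (d : ℕ) (μv lam : Fin d → ℝ) (Shalf : Matrix (Fin d) (Fin d) ℝ)
    (α : ℝ) (hα : 0 < α) (hα2 : α ≤ 2)
    (P E W : Ω → ℝ) (Z0 : Ω → ℝ) (Z1 : Ω → Fin d → ℝ)
    (hPpos : ∀ ω, 0 < P ω) (hEpos : ∀ ω, 0 < E ω) (hWpos : ∀ ω, 0 < W ω)
    (hW : Measure.map W μ = volume.withDensity fun w =>
      ENNReal.ofReal (if 0 < w then α * w ^ (α - 1) * Real.exp (-(w ^ α)) else 0))
    (hratio : Measure.map (fun ω => Real.sqrt (P ω / E ω)) μ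
      = Measure.map (fun ω => 1 / W ω) μ)
    (hindep1 : IndepFun (fun ω => P ω / E ω) (fun ω => (Z0 ω, Z1 ω)) μ)
    (hindep2 : IndepFun W (fun ω => (Z0 ω, Z1 ω)) μ)
    (Y : Ω → Fin d → ℝ)
    (hY : ∀ ω, Y ω = μv + Real.sqrt (P ω) • (|Z0 ω| • lam + Shalf.mulVec (Z1 ω))) :
    Measure.map (fun ω => (1 / Real.sqrt (E ω)) • (Y ω - μv)) μ
      = Measure.map (fun ω => (1 / W ω) • (|Z0 ω| • lam + Shalf.mulVec (Z1 ω))) μ :=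
  stmt6_general μ d μv lam Shalf α hα P E W Z0 Z1 hPpos hEpos hWpos hW hratio hindep1 hindep2 Y hY
end

section
/- The posterior density normalization: for the hierarchy V | T=t, W=w ~ N_d(λt, w^{−2}Σ), T | W=w ~ HN(0, w^{−2}), W ~ Weibull(α), the marginal joint density of (V, W) at (v, w) equals √(2πδ)·W₀·w^{d+α−1} exp(−w^α − w² d*(v)/2)·Φ(m*; 0, √δ/w), where W₀ = 2α/((2π)^{(d+1)/2}|Σ|^{1/2}), Ω = Σ + λλ', d*(v) = v'Ω^{−1}v, m* = λ'Ω^{−1}v, δ = 1 − λ'Ω^{−1}λ, obtained by integrating out t. -/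
/-!
Completing the square in `t`, with `Ω⁻¹` computed by the Sherman–Morrison formula, turns the
integrand into a constant multiple of a Gaussian in `t` with mean `m*` and variance `δ / w²`.
After the reflection `t ↦ m* - t`, its integral over `(0, ∞)` becomes, up to the normalising
constant, the cdf of `N(0, δ / w²)` at `m*`.
-/

open MeasureTheory Matrix

/-- Density of the `d`-dimensional normal distribution with mean `m` and
covariance matrix `C`. -/
noncomputable def mvNormalPdf {d : ℕ} (m : Fin d → ℝ) (C : Matrix (Fin d) (Fin d) ℝ)
    (x : Fin d → ℝ) : ℝ :=
  (2 * Real.pi) ^ (-(d : ℝ) / 2) * C.det ^ (-(1 : ℝ) / 2) *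
    Real.exp (-((x - m) ⬝ᵥ C⁻¹.mulVec (x - m)) / 2)

/-- Half-normal density with variance parameter `p` (i.e. `HN(0, p)`). -/
noncomputable def halfNormalPdf (p t : ℝ) : ℝ :=
  if 0 < t then 2 / Real.sqrt (2 * Real.pi * p) * Real.exp (-(t ^ 2) / (2 * p)) else 0

/-- Cdf of the normal distribution with mean `η` and standard deviation `ξ`. -/
noncomputable def normalCdf (x η ξ : ℝ) : ℝ :=
  ∫ s in Set.Iic x, 1 / (ξ * Real.sqrt (2 * Real.pi)) * Real.exp (-((s - η) ^ 2) / (2 * ξ ^ 2))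

theorem Matrix.inv_add_vecMulVec {n K : Type*} [Fintype n] [DecidableEq n] [Field K]
    {A : Matrix n n K} (hA : IsUnit A.det) (u v : n → K) (h : 1 + v ⬝ᵥ A⁻¹ *ᵥ u ≠ 0) :
    (A + vecMulVec u v)⁻¹ =
      A⁻¹ - (1 + v ⬝ᵥ A⁻¹ *ᵥ u)⁻¹ • vecMulVec (A⁻¹ *ᵥ u) (v ᵥ* A⁻¹) := by
  apply inv_eq_right_inv
  have hcoef : (1 + v ⬝ᵥ A⁻¹ *ᵥ u)⁻¹ + (1 + v ⬝ᵥ A⁻¹ *ᵥ u)⁻¹ * (v ⬝ᵥ A⁻¹ *ᵥ u) = 1 := by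
    field_simp
  rw [add_mul, mul_sub, mul_sub, mul_nonsing_inv _ hA, Matrix.mul_smul, Matrix.mul_smul,
    mul_vecMulVec, mulVec_mulVec, mul_nonsing_inv _ hA, one_mulVec, vecMulVec_mul,
    vecMulVec_mul_vecMulVec, vecMulVec_smul, smul_smul]
  linear_combination (norm := module) -hcoef • vecMulVec u (v ᵥ* A⁻¹)

theorem Matrix.IsSymm.dotProduct_mulVec_comm {n R : Type*} [Fintype n] [CommSemiring R]
    {A : Matrix n n R} (hA : A.IsSymm) (x y : n → R) : x ⬝ᵥ A *ᵥ y = y ⬝ᵥ A *ᵥ x := by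
  rw [dotProduct_mulVec, dotProduct_comm, ← mulVec_transpose, hA.eq]

namespace Matrix.PosDef

variable {n : Type*} [Fintype n] [DecidableEq n] {S : Matrix n n ℝ}

theorem dotProduct_inv_mulVec_self_nonneg (hS : S.PosDef) (a : n → ℝ) :
    0 ≤ a ⬝ᵥ S⁻¹ *ᵥ a :=
  hS.inv.posSemidef.dotProduct_mulVec_nonneg a

theorem inv_add_vecMulVec_self_mulVec (hS : S.PosDef) (a x : n → ℝ) :
    (S + vecMulVec a a)⁻¹ *ᵥ x =
      S⁻¹ *ᵥ x - ((1 + a ⬝ᵥ S⁻¹ *ᵥ a)⁻¹ * (a ⬝ᵥ S⁻¹ *ᵥ x)) • S⁻¹ *ᵥ a := by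
  have hc := hS.dotProduct_inv_mulVec_self_nonneg a
  rw [inv_add_vecMulVec hS.det_pos.ne'.isUnit a a (by positivity), sub_mulVec, smul_mulVec,
    vecMulVec_mulVec, op_smul_eq_smul, smul_smul, ← dotProduct_mulVec]

theorem one_sub_dotProduct_inv_add_vecMulVec_self (hS : S.PosDef) (a : n → ℝ) :
    1 - a ⬝ᵥ (S + vecMulVec a a)⁻¹ *ᵥ a = (1 + a ⬝ᵥ S⁻¹ *ᵥ a)⁻¹ := by
  have hc := hS.dotProduct_inv_mulVec_self_nonneg a
  rw [hS.inv_add_vecMulVec_self_mulVec, dotProduct_sub, dotProduct_smul, smul_eq_mul]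
  field_simp
  ring

theorem one_sub_dotProduct_inv_add_vecMulVec_self_pos (hS : S.PosDef) (a : n → ℝ) :
    0 < 1 - a ⬝ᵥ (S + vecMulVec a a)⁻¹ *ᵥ a := by
  have hc := hS.dotProduct_inv_mulVec_self_nonneg a
  rw [hS.one_sub_dotProduct_inv_add_vecMulVec_self]
  positivity

theorem dotProduct_inv_mulVec_sub_smul_add_sq (hS : S.PosDef) (a v : n → ℝ) (t : ℝ) :
    (v - t • a) ⬝ᵥ S⁻¹ *ᵥ (v - t • a) + t ^ 2 =
      v ⬝ᵥ (S + vecMulVec a a)⁻¹ *ᵥ v +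
        (t - a ⬝ᵥ (S + vecMulVec a a)⁻¹ *ᵥ v) ^ 2 / (1 - a ⬝ᵥ (S + vecMulVec a a)⁻¹ *ᵥ a) := by
  have hc := hS.dotProduct_inv_mulVec_self_nonneg a
  have hsymm : v ⬝ᵥ S⁻¹ *ᵥ a = a ⬝ᵥ S⁻¹ *ᵥ v :=
    (isHermitian_iff_isSymm.mp hS.inv.isHermitian).dotProduct_mulVec_comm v a
  rw [hS.one_sub_dotProduct_inv_add_vecMulVec_self, hS.inv_add_vecMulVec_self_mulVec]
  simp only [mulVec_sub, mulVec_smul, dotProduct_sub, sub_dotProduct, dotProduct_smul,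
    smul_dotProduct, smul_eq_mul, hsymm]
  field_simp
  ring

end Matrix.PosDef

theorem integral_Ioi_zero_comp_sub_left {E : Type*} [NormedAddCommGroup E] [NormedSpace ℝ E]
    (g : ℝ → E) (m : ℝ) : ∫ t in Set.Ioi 0, g (m - t) = ∫ s in Set.Iic m, g s := by
  have hpre : (fun t => m - t) ⁻¹' Set.Iic m = Set.Ici 0 := by ext; simp
  rw [← integral_Ici_eq_integral_Ioi, ← hpre,
    (volume.measurePreserving_sub_left m).setIntegral_preimage_emb
      (measurableEmbedding_subLeft m)]

theorem integral_Ioi_zero_gaussian_eq_normalCdf {ξ : ℝ} (hξ : ξ ≠ 0) (m : ℝ) :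
    ∫ t in Set.Ioi 0, Real.exp (-(t - m) ^ 2 / (2 * ξ ^ 2)) =
      ξ * Real.sqrt (2 * Real.pi) * normalCdf m 0 ξ := by
  have hpi : Real.sqrt (2 * Real.pi) ≠ 0 := by positivity
  rw [normalCdf, integral_const_mul, ← integral_Ioi_zero_comp_sub_left, ← mul_assoc, one_div,
    mul_inv_cancel₀ (mul_ne_zero hξ hpi), one_mul]
  simp_rw [sub_zero, ← neg_sub _ m, neg_sq]

theorem mvNormalPdf_mul_halfNormalPdf {d : ℕ} {S : Matrix (Fin d) (Fin d) ℝ} (hS : S.PosDef)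
    (a v : Fin d → ℝ) {w t : ℝ} (hw : 0 < w) (ht : 0 < t) :
    mvNormalPdf (t • a) (w⁻¹ ^ 2 • S) v * halfNormalPdf (w⁻¹ ^ 2) t =
      2 / ((2 * Real.pi) ^ (((d : ℝ) + 1) / 2) * Real.sqrt S.det) * w ^ (d + 1) *
        Real.exp (-(w ^ 2 * ((v - t • a) ⬝ᵥ S⁻¹ *ᵥ (v - t • a) + t ^ 2)) / 2) := by
  have hdet := hS.det_pos
  have hinv : (w⁻¹ ^ 2 • S)⁻¹ = w ^ 2 • S⁻¹ := by
    apply inv_eq_right_inv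
    rw [Matrix.smul_mul, Matrix.mul_smul, smul_smul, mul_nonsing_inv _ hdet.ne'.isUnit,
      ← mul_pow, inv_mul_cancel₀ hw.ne', one_pow, one_smul]
  have hdet_rpow : (w⁻¹ ^ 2 • S).det ^ (-(1 : ℝ) / 2) = w ^ d * (Real.sqrt S.det)⁻¹ := by
    have hpow : (w⁻¹ ^ 2) ^ d = ((w ^ d) ^ 2)⁻¹ := by
      rw [inv_pow, inv_pow, ← pow_mul, ← pow_mul, mul_comm]
    rw [det_smul, Fintype.card_fin, hpow, Real.mul_rpow (by positivity) hdet.le, neg_div,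
      Real.rpow_neg (by positivity), Real.rpow_neg hdet.le, ← Real.sqrt_eq_rpow,
      ← Real.sqrt_eq_rpow, Real.sqrt_inv, inv_inv, Real.sqrt_sq (by positivity)]
  have hsqrt : Real.sqrt (2 * Real.pi * w⁻¹ ^ 2) = Real.sqrt (2 * Real.pi) * w⁻¹ := by
    rw [Real.sqrt_mul (by positivity), Real.sqrt_sq (by positivity)]
  have hpi : (2 * Real.pi) ^ (((d : ℝ) + 1) / 2) =
      (2 * Real.pi) ^ ((d : ℝ) / 2) * Real.sqrt (2 * Real.pi) := by
    rw [Real.sqrt_eq_rpow, ← Real.rpow_add (by positivity)]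
    ring_nf
  have hexp : Real.exp (-((v - t • a) ⬝ᵥ (w ^ 2 • S⁻¹) *ᵥ (v - t • a)) / 2) *
        Real.exp (-t ^ 2 / (2 * w⁻¹ ^ 2)) =
      Real.exp (-(w ^ 2 * ((v - t • a) ⬝ᵥ S⁻¹ *ᵥ (v - t • a) + t ^ 2)) / 2) := by
    rw [← Real.exp_add, smul_mulVec, dotProduct_smul, smul_eq_mul]
    congr 1
    field_simp
    ring
  unfold mvNormalPdf halfNormalPdf
  rw [if_pos ht, hinv, hdet_rpow, hsqrt, ← hexp, hpi, neg_div, Real.rpow_neg (by positivity)]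
  field_simp
  ring

theorem mvNormalPdf_mul_halfNormalPdf_mul_weibullPdf {d : ℕ} {S : Matrix (Fin d) (Fin d) ℝ}
    (hS : S.PosDef) (a v : Fin d → ℝ) (α : ℝ) {w t : ℝ} (hw : 0 < w) (ht : 0 < t) :
    mvNormalPdf (t • a) (w⁻¹ ^ 2 • S) v * halfNormalPdf (w⁻¹ ^ 2) t *
        (α * w ^ (α - 1) * Real.exp (-(w ^ α))) =
      2 * α / ((2 * Real.pi) ^ (((d : ℝ) + 1) / 2) * Real.sqrt S.det) *
        (w ^ ((d : ℝ) + α - 1) * w) *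
        Real.exp (-(w ^ α) - w ^ 2 * (v ⬝ᵥ (S + vecMulVec a a)⁻¹ *ᵥ v) / 2) *
        Real.exp (-(t - a ⬝ᵥ (S + vecMulVec a a)⁻¹ *ᵥ v) ^ 2 /
          (2 * (Real.sqrt (1 - a ⬝ᵥ (S + vecMulVec a a)⁻¹ *ᵥ a) / w) ^ 2)) := by
  have hδ := hS.one_sub_dotProduct_inv_add_vecMulVec_self_pos a
  set δ := 1 - a ⬝ᵥ (S + vecMulVec a a)⁻¹ *ᵥ a
  set m := a ⬝ᵥ (S + vecMulVec a a)⁻¹ *ᵥ v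
  set dstar := v ⬝ᵥ (S + vecMulVec a a)⁻¹ *ᵥ v
  have hpow : w ^ (d + 1) * w ^ (α - 1) = w ^ ((d : ℝ) + α - 1) * w := by
    rw [← Real.rpow_natCast, ← Real.rpow_add hw, ← Real.rpow_add_one hw.ne']
    push_cast
    ring_nf
  have hexp : Real.exp (-(w ^ 2 * (dstar + (t - m) ^ 2 / δ)) / 2) * Real.exp (-(w ^ α)) =
      Real.exp (-(w ^ α) - w ^ 2 * dstar / 2) *
        Real.exp (-(t - m) ^ 2 / (2 * (Real.sqrt δ / w) ^ 2)) := by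
    rw [← Real.exp_add, ← Real.exp_add, div_pow, Real.sq_sqrt hδ.le]
    congr 1
    field_simp
    ring
  rw [mvNormalPdf_mul_halfNormalPdf hS a v hw ht, hS.dotProduct_inv_mulVec_sub_smul_add_sq, ← hpow]
  linear_combination (2 * α / ((2 * Real.pi) ^ (((d : ℝ) + 1) / 2) * Real.sqrt S.det) *
    w ^ (d + 1) * w ^ (α - 1)) * hexp

theorem stmt19_general (d : ℕ) (lam : Fin d → ℝ) (Smat : Matrix (Fin d) (Fin d) ℝ) (hS : Smat.PosDef)
    (α : ℝ) (w : ℝ) (hw : 0 < w) (v : Fin d → ℝ) :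
    ∫ t in Set.Ioi (0 : ℝ),
        mvNormalPdf (t • lam) (w⁻¹ ^ 2 • Smat) v * halfNormalPdf (w⁻¹ ^ 2) t *
          (α * w ^ (α - 1) * Real.exp (-(w ^ α)))
      = Real.sqrt (2 * Real.pi * (1 - lam ⬝ᵥ (Smat + vecMulVec lam lam)⁻¹.mulVec lam)) *
          (2 * α / ((2 * Real.pi) ^ (((d : ℝ) + 1) / 2) * Real.sqrt Smat.det)) *
          w ^ ((d : ℝ) + α - 1) *
          Real.exp (-(w ^ α) - w ^ 2 * (v ⬝ᵥ (Smat + vecMulVec lam lam)⁻¹.mulVec v) / 2) *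
          normalCdf (lam ⬝ᵥ (Smat + vecMulVec lam lam)⁻¹.mulVec v) 0
            (Real.sqrt (1 - lam ⬝ᵥ (Smat + vecMulVec lam lam)⁻¹.mulVec lam) / w) := by
  have hδ := hS.one_sub_dotProduct_inv_add_vecMulVec_self_pos lam
  rw [setIntegral_congr_fun measurableSet_Ioi fun t ht =>
      mvNormalPdf_mul_halfNormalPdf_mul_weibullPdf hS lam v α hw ht,
    integral_const_mul, integral_Ioi_zero_gaussian_eq_normalCdf (by positivity),
    Real.sqrt_mul (by positivity : (0 : ℝ) ≤ 2 * Real.pi)]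
  field_simp

/-- The joint density of `(V, W)` in the hierarchy
`V | T=t, W=w ~ N_d(λt, w⁻²Σ)`, `T | W=w ~ HN(0, w⁻²)`, `W ~ Weibull(α)`,
obtained by integrating out `t ∈ (0,∞)`. -/
theorem stmt19 (d : ℕ) (lam : Fin d → ℝ) (Smat : Matrix (Fin d) (Fin d) ℝ) (hS : Smat.PosDef)
    (α : ℝ) (hα : 0 < α) (hα2 : α ≤ 2) (w : ℝ) (hw : 0 < w) (v : Fin d → ℝ) :
    ∫ t in Set.Ioi (0 : ℝ),
        mvNormalPdf (t • lam) (w⁻¹ ^ 2 • Smat) v * halfNormalPdf (w⁻¹ ^ 2) t *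
          (α * w ^ (α - 1) * Real.exp (-(w ^ α)))
      = Real.sqrt (2 * Real.pi * (1 - lam ⬝ᵥ (Smat + vecMulVec lam lam)⁻¹.mulVec lam)) *
          (2 * α / ((2 * Real.pi) ^ (((d : ℝ) + 1) / 2) * Real.sqrt Smat.det)) *
          w ^ ((d : ℝ) + α - 1) *
          Real.exp (-(w ^ α) - w ^ 2 * (v ⬝ᵥ (Smat + vecMulVec lam lam)⁻¹.mulVec v) / 2) *
          normalCdf (lam ⬝ᵥ (Smat + vecMulVec lam lam)⁻¹.mulVec v) 0
            (Real.sqrt (1 - lam ⬝ᵥ (Smat + vecMulVec lam lam)⁻¹.mulVec lam) / w) :=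
  stmt19_general d lam Smat hS α w hw v
end
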